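/- arXiv:2211.01083 — 5 statements merged into one kernel-verified Lean document; each statement's English description precedes it below -/
import Mathlib

section
/- Let d_1 ≥ d_2 ≥ ... ≥ d_n be the degree sequence of a finite simple graph G in decreasing order. In the Maker-Maker scoring game Incidence on G (players alternately claim vertices, a player scores one point for each edge both of whose endpoints they claimed, and the score of a play is Left's points minus Right's points, defined by minimax over all plays), the optimal score with Left moving first equals (1/2)·(Σ_{i odd} d_i − Σ_{i even} d_i). -/
/-!
On a complete play `(A, B)` every vertex lies on one side, so `∑_{v ∈ A} deg v` counts each
edge inside `A` twice and each edge between `A` and `B` once, and symmetrically for `B`. Hence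
twice the Incidence score equals `∑_{v ∈ A} deg v - ∑_{v ∈ B} deg v`, and doubling the score
doubles the minimax value. In a game where claiming `v` is worth a fixed weight `w v`, greedy play
is optimal: the value for the player to move is the alternating sum of the weights in decreasing
order, by an exchange argument on that alternating sum.
-/

/-- Minimax value of a scoring positional game: players alternately claim
unclaimed vertices (`turn = true` means Left/Maker to move); when all vertices
are claimed the value is given by `score VL VR`. Left maximizes, Right minimizes. -/
noncomputable def gameValue {V : Type} [Fintype V] [DecidableEq V]
    (score : Finset V → Finset V → ℤ) :
    Bool → Finset V → Finset V → ℤ := fun turn VL VR =>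
  if h : (VL ∪ VR)ᶜ = (∅ : Finset V) then score VL VR
  else
    have hne : ((VL ∪ VR)ᶜ).attach.Nonempty :=
      Finset.attach_nonempty_iff.mpr (Finset.nonempty_iff_ne_empty.mpr h)
    if turn then
      ((VL ∪ VR)ᶜ).attach.sup' hne (fun v => gameValue score false (insert v.1 VL) VR)
    else
      ((VL ∪ VR)ᶜ).attach.inf' hne (fun v => gameValue score true VL (insert v.1 VR))
termination_by turn VL VR => ((VL ∪ VR)ᶜ).card
decreasing_by
  · rw [Finset.insert_union, Finset.compl_insert]
    exact Finset.card_erase_lt_of_mem v.2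
  · rw [Finset.union_insert, Finset.compl_insert]
    exact Finset.card_erase_lt_of_mem v.2

/-- Maker-Breaker Incidence final score: number of edges of `G` both of whose
endpoints belong to Left's (Maker's) set. -/
noncomputable def mbScore {V : Type} [Fintype V] [DecidableEq V]
    (G : SimpleGraph V) (VL : Finset V) (_ : Finset V) : ℤ :=
  ({e ∈ G.edgeSet | ∀ w ∈ e, w ∈ VL} : Set (Sym2 V)).ncard

/-- Maker-Maker Incidence final score: Left's edges minus Right's edges. -/
noncomputable def mmScore {V : Type} [Fintype V] [DecidableEq V]
    (G : SimpleGraph V) (VL VR : Finset V) : ℤ :=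
  (({e ∈ G.edgeSet | ∀ w ∈ e, w ∈ VL} : Set (Sym2 V)).ncard : ℤ)
    - (({e ∈ G.edgeSet | ∀ w ∈ e, w ∈ VR} : Set (Sym2 V)).ncard : ℤ)

noncomputable def LsMB {V : Type} [Fintype V] [DecidableEq V] (G : SimpleGraph V) : ℤ :=
  gameValue (mbScore G) true ∅ ∅

noncomputable def RsMB {V : Type} [Fintype V] [DecidableEq V] (G : SimpleGraph V) : ℤ :=
  gameValue (mbScore G) false ∅ ∅

noncomputable def LsMM {V : Type} [Fintype V] [DecidableEq V] (G : SimpleGraph V) : ℤ :=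
  gameValue (mmScore G) true ∅ ∅

noncomputable def RsMM {V : Type} [Fintype V] [DecidableEq V] (G : SimpleGraph V) : ℤ :=
  gameValue (mmScore G) false ∅ ∅

/-- Maker-Breaker final score on a hypergraph with edge set `E`. -/
def mbScoreH {V : Type} [Fintype V] [DecidableEq V]
    (E : Finset (Finset V)) (VL : Finset V) (_ : Finset V) : ℤ :=
  ((E.filter (fun e => e ⊆ VL)).card : ℤ)

/-- Maker-Maker final score on a hypergraph with edge set `E`. -/
def mmScoreH {V : Type} [Fintype V] [DecidableEq V]
    (E : Finset (Finset V)) (VL VR : Finset V) : ℤ :=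
  ((E.filter (fun e => e ⊆ VL)).card : ℤ) - ((E.filter (fun e => e ⊆ VR)).card : ℤ)

theorem List.sub_alternatingSum_erase_le {α : Type*} [AddCommGroup α] [LinearOrder α]
    [IsOrderedAddMonoid α] :
    ∀ {l : List α}, l.Pairwise (· ≥ ·) → ∀ {b : α}, b ∈ l →
      b - (l.erase b).alternatingSum ≤ l.alternatingSum
  | [], _, _, hb => absurd hb List.not_mem_nil
  | [a], _, b, hb => by
    rw [List.mem_singleton.mp hb]
    simp
  | a :: c :: u, hl, b, hb => by
    have hca : c - a ≤ a - c :=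
      (sub_nonpos.2 (List.rel_of_pairwise_cons hl (by simp))).trans
        (sub_nonneg.2 (List.rel_of_pairwise_cons hl (by simp)))
    rcases eq_or_ne b a with rfl | hba
    · simp
    have hb' : b ∈ c :: u := (List.mem_cons.mp hb).resolve_left hba
    rw [List.erase_cons_tail (by simpa using hba.symm), List.alternatingSum_cons_cons]
    rcases eq_or_ne b c with rfl | hbc
    · simp only [List.erase_cons_head, List.alternatingSum_cons]
      calc b - (a - u.alternatingSum) = (b - a) + u.alternatingSum := by abel
        _ ≤ (a - b) + u.alternatingSum := add_le_add_left hca _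
        _ = _ := by abel
    · have hbu : b ∈ u := (List.mem_cons.mp hb').resolve_left hbc
      have ih := List.sub_alternatingSum_erase_le hl.of_cons.of_cons hbu
      rw [List.erase_cons_tail (by simpa using hbc.symm), List.alternatingSum_cons_cons]
      calc b - (a - c + (u.erase b).alternatingSum)
          = (b - (u.erase b).alternatingSum) + (c - a) := by abel
        _ ≤ u.alternatingSum + (a - c) := add_le_add ih hca
        _ = _ := by abel

theorem Multiset.sort_erase {β : Type*} [DecidableEq β] (r : β → β → Prop) [DecidableRel r]
    [IsTrans β r] [Std.Antisymm r] [Std.Total r] (m : Multiset β) (b : β) :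
    (m.erase b).sort r = (m.sort r).erase b :=
  List.Perm.eq_of_pairwise' (Multiset.pairwise_sort _ r)
    ((Multiset.pairwise_sort m r).sublist (List.erase_sublist ..))
    (Multiset.coe_eq_coe.mp (by rw [Multiset.sort_eq, ← Multiset.coe_erase, Multiset.sort_eq]))

theorem Finset.sort_map_erase_val {ι β : Type*} [DecidableEq ι] [LinearOrder β] (w : ι → β)
    {S : Finset ι} {v : ι} (hv : v ∈ S) :
    ((S.erase v).val.map w).sort (· ≥ ·) = ((S.val.map w).sort (· ≥ ·)).erase (w v) := by
  rw [Finset.erase_val, Multiset.map_erase_of_mem _ _ hv, Multiset.sort_erase]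

section GreedyValue

variable {α ι : Type*} [AddCommGroup α] [LinearOrder α]

/-- The outcome, for the player to move, when both players in turn take the heaviest remaining
element of `S`. -/
noncomputable def greedyValue (w : ι → α) (S : Finset ι) : α :=
  ((S.val.map w).sort (· ≥ ·)).alternatingSum

@[simp]
theorem greedyValue_empty (w : ι → α) : greedyValue w ∅ = 0 := by
  simp [greedyValue]

theorem sub_greedyValue_erase_le [IsOrderedAddMonoid α] [DecidableEq ι] (w : ι → α)
    {S : Finset ι} {v : ι} (hv : v ∈ S) :
    w v - greedyValue w (S.erase v) ≤ greedyValue w S := by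
  rw [greedyValue, Finset.sort_map_erase_val w hv]
  exact List.sub_alternatingSum_erase_le (Multiset.pairwise_sort _ _)
    ((Multiset.mem_sort _).mpr (Multiset.mem_map_of_mem w hv))

theorem exists_sub_greedyValue_erase_eq [DecidableEq ι] (w : ι → α) {S : Finset ι}
    (hS : S.Nonempty) : ∃ v ∈ S, w v - greedyValue w (S.erase v) = greedyValue w S := by
  obtain ⟨a, t, hsort⟩ : ∃ a t, (S.val.map w).sort (· ≥ ·) = a :: t := by
    refine List.exists_cons_of_ne_nil fun h => hS.ne_empty ?_
    simpa [h] using (Multiset.sort_eq (S.val.map w) (· ≥ ·)).symm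
  obtain ⟨v, hv, rfl⟩ : ∃ v ∈ S, w v = a :=
    Multiset.mem_map.mp ((Multiset.mem_sort _).mp (hsort ▸ List.mem_cons_self))
  refine ⟨v, hv, ?_⟩
  rw [greedyValue, greedyValue, Finset.sort_map_erase_val w hv, hsort, List.erase_cons_head,
    List.alternatingSum_cons]

theorem sup'_add_sub_greedyValue_erase [IsOrderedAddMonoid α] [DecidableEq ι] (w : ι → α)
    (c : α) {S : Finset ι} (hS : S.Nonempty) :
    (S.sup' hS fun v => c + (w v - greedyValue w (S.erase v))) = c + greedyValue w S := by
  refine le_antisymm (Finset.sup'_le hS _ fun v hv => ?_) ?_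
  · exact add_le_add_right (sub_greedyValue_erase_le w hv) c
  · obtain ⟨v, hv, hopt⟩ := exists_sub_greedyValue_erase_eq w hS
    exact hopt ▸ Finset.le_sup' (fun v => c + (w v - greedyValue w (S.erase v))) hv

theorem inf'_sub_sub_greedyValue_erase [IsOrderedAddMonoid α] [DecidableEq ι] (w : ι → α)
    (c : α) {S : Finset ι} (hS : S.Nonempty) :
    (S.inf' hS fun v => c - (w v - greedyValue w (S.erase v))) = c - greedyValue w S := by
  refine le_antisymm ?_ (Finset.le_inf' hS _ fun v hv => ?_)
  · obtain ⟨v, hv, hopt⟩ := exists_sub_greedyValue_erase_eq w hS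
    exact hopt ▸ Finset.inf'_le (fun v => c - (w v - greedyValue w (S.erase v))) hv
  · exact sub_le_sub_left (sub_greedyValue_erase_le w hv) c

theorem greedyValue_univ_of_antitone [Fintype ι] (w : ι → α) (e : Fin (Fintype.card ι) ≃ ι)
    (hw : Antitone (w ∘ e)) :
    greedyValue w Finset.univ = ∑ i : Fin (Fintype.card ι), (-1 : ℤ) ^ (i : ℕ) • w (e i) := by
  have hsort : (Finset.univ.val.map w).sort (· ≥ ·) = List.ofFn (w ∘ e) := by
    refine List.Perm.eq_of_pairwise' (Multiset.pairwise_sort _ _)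
      (List.pairwise_ofFn.mpr fun i j hij => hw hij.le) (Multiset.coe_eq_coe.mp ?_)
    rw [Multiset.sort_eq, ← Fin.univ_val_map, ← Multiset.map_map, Multiset.map_univ_val_equiv]
  rw [greedyValue, hsort, List.alternatingSum_eq_finsetSum]
  exact Fintype.sum_equiv (finCongr List.length_ofFn) _ _ fun i => by simp; rfl

end GreedyValue

def weightScore {V : Type} (w : V → ℤ) (A B : Finset V) : ℤ := ∑ v ∈ A, w v - ∑ v ∈ B, w v

theorem weightScore_insert_left {V : Type} [DecidableEq V] (w : V → ℤ) {A B : Finset V}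
    {v : V} (hv : v ∉ A) :
    weightScore w (insert v A) B = weightScore w A B + w v := by
  rw [weightScore, weightScore, Finset.sum_insert hv]
  abel

theorem weightScore_insert_right {V : Type} [DecidableEq V] (w : V → ℤ) {A B : Finset V}
    {v : V} (hv : v ∉ B) :
    weightScore w A (insert v B) = weightScore w A B - w v := by
  rw [weightScore, weightScore, Finset.sum_insert hv]
  abel

section Game

variable {V : Type} [Fintype V] [DecidableEq V]

theorem gameValue_of_compl_eq_empty {score : Finset V → Finset V → ℤ} {turn : Bool}
    {VL VR : Finset V} (h : (VL ∪ VR)ᶜ = ∅) :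
    gameValue score turn VL VR = score VL VR := by
  rw [gameValue, dif_pos h]

theorem gameValue_true {score : Finset V → Finset V → ℤ} {VL VR : Finset V}
    (h : (VL ∪ VR)ᶜ.Nonempty) :
    gameValue score true VL VR =
      (VL ∪ VR)ᶜ.sup' h fun v => gameValue score false (insert v VL) VR := by
  rw [gameValue, dif_neg h.ne_empty, if_pos rfl]
  exact (Finset.sup'_comp_eq_map (fun v => gameValue score false (insert v VL) VR)
    (f := .subtype _) _).trans (Finset.sup'_congr _ Finset.attach_map_val fun _ _ => rfl)

theorem gameValue_false {score : Finset V → Finset V → ℤ} {VL VR : Finset V}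
    (h : (VL ∪ VR)ᶜ.Nonempty) :
    gameValue score false VL VR =
      (VL ∪ VR)ᶜ.inf' h fun v => gameValue score true VL (insert v VR) := by
  rw [gameValue, dif_neg h.ne_empty, if_neg Bool.false_ne_true]
  exact (Finset.inf'_comp_eq_map (fun v => gameValue score true VL (insert v VR))
    (f := .subtype _) _).trans (Finset.inf'_congr _ Finset.attach_map_val fun _ _ => rfl)

theorem gameValue_eq_comp_of_monotone {score score' : Finset V → Finset V → ℤ} {f : ℤ → ℤ}
    (hf : Monotone f)
    (h : ∀ A B, Disjoint A B → A ∪ B = Finset.univ → score' A B = f (score A B))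
    (turn : Bool) {VL VR : Finset V} (hd : Disjoint VL VR) :
    gameValue score' turn VL VR = f (gameValue score turn VL VR) := by
  induction turn, VL, VR using gameValue.induct with
  | case1 turn VL VR h0 =>
    rw [gameValue_of_compl_eq_empty h0, gameValue_of_compl_eq_empty h0]
    exact h VL VR hd (Finset.compl_eq_empty_iff _ |>.mp h0)
  | case2 VL VR h0 _ ih =>
    have hS := Finset.nonempty_iff_ne_empty.mpr h0
    rw [gameValue_true hS, gameValue_true hS,
      Finset.apply_sup'_eq_sup'_comp hS f fun _ _ => hf.map_max]
    refine Finset.sup'_congr hS rfl fun v hv => ih ⟨v, hv⟩ ?_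
    exact Finset.disjoint_insert_left.mpr ⟨(by simpa using hv : v ∉ VL ∧ v ∉ VR).2, hd⟩
  | case3 turn VL VR h0 _ hturn ih =>
    obtain rfl : turn = false := by simpa using hturn
    have hS := Finset.nonempty_iff_ne_empty.mpr h0
    rw [gameValue_false hS, gameValue_false hS,
      Finset.apply_inf'_eq_inf'_comp hS f fun _ _ => hf.map_min]
    refine Finset.inf'_congr hS rfl fun v hv => ih ⟨v, hv⟩ ?_
    exact Finset.disjoint_insert_right.mpr ⟨(by simpa using hv : v ∉ VL ∧ v ∉ VR).1, hd⟩

theorem gameValue_weightScore (w : V → ℤ) (turn : Bool) (VL VR : Finset V) :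
    gameValue (weightScore w) turn VL VR =
      weightScore w VL VR + if turn then greedyValue w (VL ∪ VR)ᶜ
        else -greedyValue w (VL ∪ VR)ᶜ := by
  induction turn, VL, VR using gameValue.induct with
  | case1 turn VL VR h0 =>
    rw [gameValue_of_compl_eq_empty h0, h0]
    simp
  | case2 VL VR h0 _ ih =>
    have hS := Finset.nonempty_iff_ne_empty.mpr h0
    have hmove : ∀ v ∈ (VL ∪ VR)ᶜ, gameValue (weightScore w) false (insert v VL) VR =
        weightScore w VL VR + (w v - greedyValue w ((VL ∪ VR)ᶜ.erase v)) := by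
      intro v hv
      rw [ih ⟨v, hv⟩, Finset.insert_union, Finset.compl_insert,
        weightScore_insert_left w (by simpa using hv : v ∉ VL ∧ v ∉ VR).1,
        if_neg Bool.false_ne_true]
      abel
    rw [gameValue_true hS, Finset.sup'_congr hS rfl hmove, sup'_add_sub_greedyValue_erase,
      if_pos rfl]
  | case3 turn VL VR h0 _ hturn ih =>
    obtain rfl : turn = false := by simpa using hturn
    have hS := Finset.nonempty_iff_ne_empty.mpr h0
    have hmove : ∀ v ∈ (VL ∪ VR)ᶜ, gameValue (weightScore w) true VL (insert v VR) =
        weightScore w VL VR - (w v - greedyValue w ((VL ∪ VR)ᶜ.erase v)) := by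
      intro v hv
      rw [ih ⟨v, hv⟩, Finset.union_insert, Finset.compl_insert,
        weightScore_insert_right w (by simpa using hv : v ∉ VL ∧ v ∉ VR).2, if_pos rfl]
      abel
    rw [gameValue_false hS, Finset.inf'_congr hS rfl hmove, inf'_sub_sub_greedyValue_erase,
      if_neg Bool.false_ne_true, sub_eq_add_neg]

end Game

namespace SimpleGraph

open Finset

variable {V : Type} [Fintype V] [DecidableEq V] (G : SimpleGraph V) [DecidableRel G.Adj]

theorem ncard_edgeSet_filter_eq_card_inter_sym2 (A : Finset V) :
    ({e ∈ G.edgeSet | ∀ w ∈ e, w ∈ A} : Set (Sym2 V)).ncard = #(G.edgeFinset ∩ A.sym2) := by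
  rw [← Set.ncard_coe_finset]
  congr 1
  ext e
  simp only [coe_inter, coe_edgeFinset, Set.mem_inter_iff, Set.mem_ofPred_eq, mem_coe,
    mem_sym2_iff]

theorem two_mul_card_edgeFinset_inter_sym2 (A : Finset V) :
    2 * #(G.edgeFinset ∩ A.sym2) = ∑ v ∈ A, #{u ∈ A | G.Adj v u} := by
  rw [← filter_edgeFinset_toFinset_subset, card_filter_edgeFinset_toFinset_subset,
    ← sum_degrees_eq_twice_card_edges, ← sum_coe_sort A]
  refine Fintype.sum_congr _ _ fun v => ?_
  rw [← card_neighborFinset_eq_degree, ← card_map (.subtype _)]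
  congr 1
  ext u
  simp [and_comm]

theorem degree_eq_card_adj_add_card_adj {A B : Finset V} (hd : Disjoint A B)
    (hu : A ∪ B = univ) (v : V) :
    G.degree v = #{u ∈ A | G.Adj v u} + #{u ∈ B | G.Adj v u} := by
  rw [← card_union_of_disjoint (disjoint_filter_filter hd), ← filter_union, hu,
    ← card_neighborFinset_eq_degree, neighborFinset_eq_filter]

theorem two_mul_mmScore_eq_weightScore_degree {A B : Finset V} (hd : Disjoint A B)
    (hu : A ∪ B = univ) :
    2 * mmScore G A B = weightScore (fun v => (G.degree v : ℤ)) A B := by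
  have hsum (X : Finset V) : ∑ v ∈ X, G.degree v =
      ∑ v ∈ X, #{u ∈ A | G.Adj v u} + ∑ v ∈ X, #{u ∈ B | G.Adj v u} := by
    rw [← sum_add_distrib]
    exact sum_congr rfl fun v _ => G.degree_eq_card_adj_add_card_adj hd hu v
  have hcross : ∑ v ∈ A, #{u ∈ B | G.Adj v u} = ∑ v ∈ B, #{u ∈ A | G.Adj v u} := by
    simpa [bipartiteAbove, bipartiteBelow, G.adj_comm] using
      sum_card_bipartiteAbove_eq_sum_card_bipartiteBelow G.Adj (s := A) (t := B)
  have hA := G.two_mul_card_edgeFinset_inter_sym2 A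
  have hB := G.two_mul_card_edgeFinset_inter_sym2 B
  rw [mmScore, weightScore, G.ncard_edgeSet_filter_eq_card_inter_sym2,
    G.ncard_edgeSet_filter_eq_card_inter_sym2, ← Nat.cast_sum, ← Nat.cast_sum, hsum A, hsum B]
  omega

end SimpleGraph

/-- The Maker-Maker Incidence value of a graph, Left moving first,
equals half the alternating sum of the decreasing degree sequence. -/
theorem makerMaker_incidence_value_eq_alternating_degree_sum
    {V : Type} [Fintype V] [DecidableEq V] (G : SimpleGraph V) [DecidableRel G.Adj]
    (e : Fin (Fintype.card V) ≃ V)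
    (hmono : Antitone fun i => G.degree (e i)) :
    (LsMM G : ℚ) =
      (1 / 2) * ∑ i : Fin (Fintype.card V), (-1 : ℚ) ^ (i : ℕ) * (G.degree (e i) : ℚ) := by
  have key : 2 * LsMM G = ∑ i : Fin (Fintype.card V), (-1 : ℤ) ^ (i : ℕ) • (G.degree (e i) : ℤ) :=
    calc 2 * LsMM G = gameValue (weightScore fun v => (G.degree v : ℤ)) true ∅ ∅ :=
          (gameValue_eq_comp_of_monotone (f := (2 * ·)) (monotone_mul_left_of_nonneg zero_le_two)
            (fun _ _ hd hu => (G.two_mul_mmScore_eq_weightScore_degree hd hu).symm) true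
            (Finset.disjoint_empty_left ∅)).symm
      _ = greedyValue (fun v => (G.degree v : ℤ)) Finset.univ := by
          simp [gameValue_weightScore, weightScore]
      _ = _ := greedyValue_univ_of_antitone _ e (Nat.mono_cast.comp_antitone hmono)
  have keyℚ := congrArg (Int.cast : ℤ → ℚ) key
  push_cast [smul_eq_mul] at keyℚ
  linarith
end

section
/- In the Maker-Maker scoring positional game, the optimal score is monotone in who moves first: for every finite hypergraph H and every position (sets V_L, V_R of already-claimed vertices, disjoint), Ls(H, V_L, V_R) ≥ Rs(H, V_L, V_R) (i.e. the game is nonzugzwang). -/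
/-!
Giving Right one more free vertex can never raise the value of a position, whoever is to move,
provided the final score does not decrease when a vertex passes from Right's set to Left's.
This is proved by induction on the number of free vertices; when Right, to move, answers with
that very vertex, the claim is nonzugzwang at the smaller position, which in turn follows from
the claim there. Nonzugzwang itself follows: Right's first move `v` leads to a position with
value at most Left's value at the same position with `v` given to Right, hence at most the value
with Left to move.
-/

section GameValue

variable {V : Type} [Fintype V] [DecidableEq V] {s : Finset V → Finset V → ℤ}
  {VL VR : Finset V} {c : ℤ}

theorem gameValue_of_union_eq_univ (t : Bool) (h : VL ∪ VR = Finset.univ) :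
    gameValue s t VL VR = s VL VR := by
  rw [gameValue.eq_1, dif_pos (Finset.compl_eq_empty_iff _ |>.mpr h)]

theorem gameValue_true_le (h : VL ∪ VR ≠ Finset.univ)
    (hc : ∀ v ∉ VL ∪ VR, gameValue s false (insert v VL) VR ≤ c) :
    gameValue s true VL VR ≤ c := by
  rw [gameValue.eq_1 s true, dif_neg (mt (Finset.compl_eq_empty_iff _).mp h), if_pos rfl]
  exact Finset.sup'_le _ _ fun v _ => hc v (Finset.mem_compl.mp v.2)

theorem le_gameValue_true {v : V} (hv : v ∉ VL ∪ VR) :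
    gameValue s false (insert v VL) VR ≤ gameValue s true VL VR := by
  have hfree : v ∈ (VL ∪ VR)ᶜ := Finset.mem_compl.mpr hv
  rw [gameValue.eq_1 s true, dif_neg (Finset.ne_empty_of_mem hfree), if_pos rfl]
  exact Finset.le_sup'_of_le _ (Finset.mem_attach _ ⟨v, hfree⟩) le_rfl

theorem le_gameValue_false (h : VL ∪ VR ≠ Finset.univ)
    (hc : ∀ v ∉ VL ∪ VR, c ≤ gameValue s true VL (insert v VR)) :
    c ≤ gameValue s false VL VR := by
  rw [gameValue.eq_1 s false, dif_neg (mt (Finset.compl_eq_empty_iff _).mp h),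
    if_neg Bool.false_ne_true]
  exact Finset.le_inf' _ _ fun v _ => hc v (Finset.mem_compl.mp v.2)

theorem gameValue_false_le {v : V} (hv : v ∉ VL ∪ VR) :
    gameValue s false VL VR ≤ gameValue s true VL (insert v VR) := by
  have hfree : v ∈ (VL ∪ VR)ᶜ := Finset.mem_compl.mpr hv
  rw [gameValue.eq_1 s false VL VR, dif_neg (Finset.ne_empty_of_mem hfree),
    if_neg Bool.false_ne_true]
  exact Finset.inf'_le_of_le _ (Finset.mem_attach _ ⟨v, hfree⟩) le_rfl

theorem card_compl_insert_lt {A : Finset V} {v : V} (hv : v ∉ A) :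
    (insert v A)ᶜ.card < Aᶜ.card := by
  rw [Finset.compl_insert]
  exact Finset.card_erase_lt_of_mem (Finset.mem_compl.mpr hv)

theorem gameValue_false_le_true_of_insert_right_le
    (hA : ∀ v ∉ VL ∪ VR, gameValue s true VL (insert v VR) ≤ gameValue s true VL VR) :
    gameValue s false VL VR ≤ gameValue s true VL VR := by
  by_cases hfull : VL ∪ VR = Finset.univ
  · rw [gameValue_of_union_eq_univ _ hfull, gameValue_of_union_eq_univ _ hfull]
  · obtain ⟨v, hv⟩ : ∃ v, v ∉ VL ∪ VR := by simpa [Finset.eq_univ_iff_forall] using hfull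
    exact (gameValue_false_le hv).trans (hA v hv)

theorem gameValue_insert_right_le (hs : ∀ VL VR v, s VL (insert v VR) ≤ s (insert v VL) VR)
    (t : Bool) {VL VR : Finset V} {v : V} (hv : v ∉ VL ∪ VR) :
    gameValue s t VL (insert v VR) ≤ gameValue s t VL VR := by
  cases t with
  | true =>
    by_cases hfull : VL ∪ insert v VR = Finset.univ
    · have hfull' : insert v VL ∪ VR = Finset.univ := by
        rwa [Finset.insert_union, ← Finset.union_insert]
      calc gameValue s true VL (insert v VR) = s VL (insert v VR) :=
            gameValue_of_union_eq_univ _ hfull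
        _ ≤ s (insert v VL) VR := hs VL VR v
        _ = gameValue s false (insert v VL) VR := (gameValue_of_union_eq_univ _ hfull').symm
        _ ≤ gameValue s true VL VR := le_gameValue_true hv
    · refine gameValue_true_le hfull fun w hw' => ?_
      have hw : w ∉ VL ∪ VR := by
        simp only [Finset.mem_union, Finset.mem_insert, not_or] at hw' ⊢; tauto
      have hv' : v ∉ insert w VL ∪ VR := by
        simp only [Finset.mem_union, Finset.mem_insert, not_or] at hv hw' ⊢; tauto
      exact (gameValue_insert_right_le hs false hv').trans (le_gameValue_true hw)
  | false =>
    refine le_gameValue_false (fun h => hv (h ▸ Finset.mem_univ v)) fun w hw => ?_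
    by_cases hwv : w = v
    · subst hwv
      exact gameValue_false_le_true_of_insert_right_le fun u hu =>
        gameValue_insert_right_le hs true hu
    · have hw' : w ∉ VL ∪ insert v VR := by
        simp only [Finset.mem_union, Finset.mem_insert, not_or] at hw ⊢; tauto
      have hv' : v ∉ VL ∪ insert w VR := by
        simp only [Finset.mem_union, Finset.mem_insert, not_or] at hv ⊢; tauto
      calc gameValue s false VL (insert v VR)
          ≤ gameValue s true VL (insert w (insert v VR)) := gameValue_false_le hw'
        _ = gameValue s true VL (insert v (insert w VR)) := by rw [Finset.insert_comm]
        _ ≤ gameValue s true VL (insert w VR) := gameValue_insert_right_le hs true hv'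
termination_by ((VL ∪ VR)ᶜ).card
decreasing_by
  all_goals
    simp only [Finset.union_insert, Finset.insert_union]
    exact card_compl_insert_lt hw

theorem gameValue_false_le_true (hs : ∀ VL VR v, s VL (insert v VR) ≤ s (insert v VL) VR)
    (VL VR : Finset V) : gameValue s false VL VR ≤ gameValue s true VL VR :=
  gameValue_false_le_true_of_insert_right_le fun _ hv => gameValue_insert_right_le hs true hv

end GameValue

theorem mmScoreH_mono {V : Type} [Fintype V] [DecidableEq V] (E : Finset (Finset V))
    {VL VL' VR VR' : Finset V} (hL : VL ⊆ VL') (hR : VR' ⊆ VR) :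
    mmScoreH E VL VR ≤ mmScoreH E VL' VR' := by
  have hLeft : (E.filter (· ⊆ VL)).card ≤ (E.filter (· ⊆ VL')).card :=
    Finset.card_le_card (Finset.monotone_filter_right E fun _ _ he => he.trans hL)
  have hRight : (E.filter (· ⊆ VR')).card ≤ (E.filter (· ⊆ VR)).card :=
    Finset.card_le_card (Finset.monotone_filter_right E fun _ _ he => he.trans hR)
  unfold mmScoreH
  omega

theorem makerMaker_scoring_game_nonzugzwang_general {V : Type} [Fintype V] [DecidableEq V]
    (E : Finset (Finset V)) (VL VR : Finset V) :
    gameValue (mmScoreH E) false VL VR ≤ gameValue (mmScoreH E) true VL VR :=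
  gameValue_false_le_true
    (fun _ _ v => mmScoreH_mono E (Finset.subset_insert v _) (Finset.subset_insert v _)) VL VR

/-- The Maker-Maker scoring positional game is nonzugzwang:
in every position, the value with Left to move is at least the value with Right to move. -/
theorem makerMaker_scoring_game_nonzugzwang {V : Type} [Fintype V] [DecidableEq V]
    (E : Finset (Finset V)) (VL VR : Finset V) (hdisj : Disjoint VL VR) :
    gameValue (mmScoreH E) false VL VR ≤ gameValue (mmScoreH E) true VL VR :=
  makerMaker_scoring_game_nonzugzwang_general E VL VR
end

section
/- Let G be a finite simple graph with n vertices and m edges. In the Maker-Breaker scoring game Incidence on G, the optimal score of Maker satisfies Ls(G) ≥ m/4 − n/8 (Maker moving first) and Rs(G) ≤ m/4 (Breaker moving first). -/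
/-! ### Auxiliary development for the Erdős–Selfridge potential argument -/

section ESAux

set_option linter.unusedSectionVars false

variable {V : Type} [Fintype V] [DecidableEq V]

lemma gameValue_of_empty (score : Finset V → Finset V → ℤ) (t : Bool) {VL VR : Finset V}
    (h : (VL ∪ VR)ᶜ = ∅) : gameValue score t VL VR = score VL VR := by
  rw [gameValue]; simp [h]

lemma gameValue_true_of_ne (score : Finset V → Finset V → ℤ) {VL VR : Finset V}
    (h : (VL ∪ VR)ᶜ ≠ ∅) : gameValue score true VL VR =
      ((VL ∪ VR)ᶜ).attach.sup'
        (Finset.attach_nonempty_iff.mpr (Finset.nonempty_iff_ne_empty.mpr h))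
        (fun v => gameValue score false (insert v.1 VL) VR) := by
  rw [gameValue, dif_neg h]; simp

lemma gameValue_false_of_ne (score : Finset V → Finset V → ℤ) {VL VR : Finset V}
    (h : (VL ∪ VR)ᶜ ≠ ∅) : gameValue score false VL VR =
      ((VL ∪ VR)ᶜ).attach.inf'
        (Finset.attach_nonempty_iff.mpr (Finset.nonempty_iff_ne_empty.mpr h))
        (fun v => gameValue score true VL (insert v.1 VR)) := by
  rw [gameValue, dif_neg h]; simp

/-- Erdős–Selfridge weight of a potential edge. -/
noncomputable def wtf (VL VR : Finset V) : Sym2 V → ℤ :=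
  Sym2.lift ⟨fun a b => if a ∈ VR ∨ b ∈ VR then 0 else
      (if a ∈ VL then 2 else 1) * (if b ∈ VL then 2 else 1),
    by intro a b; simp [or_comm, mul_comm]⟩

@[simp] lemma wtf_mk (VL VR : Finset V) (a b : V) :
    wtf VL VR s(a, b) = if a ∈ VR ∨ b ∈ VR then 0 else
      (if a ∈ VL then 2 else 1) * (if b ∈ VL then 2 else 1) := rfl

lemma wtf_nonneg (VL VR : Finset V) (e : Sym2 V) : 0 ≤ wtf VL VR e := by
  induction e using Sym2.ind with
  | _ a b => simp only [wtf_mk]; split_ifs <;> norm_num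

lemma wtf_insertR_le (VL VR : Finset V) (v : V) (e : Sym2 V) :
    wtf VL (insert v VR) e ≤ wtf VL VR e := by
  induction e using Sym2.ind with
  | _ a b =>
    simp only [wtf_mk, Finset.mem_insert]
    split_ifs <;> first | rfl | tauto | norm_num

lemma wtf_le_insertL (VL VR : Finset V) (u : V) (e : Sym2 V) :
    wtf VL VR e ≤ wtf (insert u VL) VR e := by
  induction e using Sym2.ind with
  | _ a b =>
    simp only [wtf_mk, Finset.mem_insert]
    split_ifs <;> first | rfl | tauto | norm_num

lemma wtf_I1 (VL VR : Finset V) (u v : V) (e : Sym2 V) :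
    wtf (insert u VL) (insert v VR) e + wtf VL VR e ≤
      wtf (insert u VL) VR e + wtf VL (insert v VR) e := by
  induction e using Sym2.ind with
  | _ a b =>
    simp only [wtf_mk, Finset.mem_insert]
    split_ifs <;> first | rfl | tauto | norm_num

lemma wtf_EQ (VL VR : Finset V) {u : V} (hu : u ∉ VL) {e : Sym2 V} (hd : ¬ e.IsDiag) :
    wtf (insert u VL) VR e + wtf VL (insert u VR) e = 2 * wtf VL VR e := by
  induction e using Sym2.ind with
  | _ a b =>
    rw [Sym2.mk_isDiag_iff] at hd
    by_cases hau : a = u <;> by_cases hbu : b = u <;> subst_vars <;>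
      simp only [wtf_mk, Finset.mem_insert] <;> split_ifs <;>
      first | tauto | norm_num

lemma wtf_I2 (VL VR : Finset V) {u v : V} (hu : u ∉ VL) (hv : v ∉ VL) (hvu : v ≠ u)
    {e : Sym2 V} (hd : ¬ e.IsDiag) :
    wtf (insert v (insert u VL)) VR e + wtf VL VR e ≤
      wtf (insert v VL) VR e + wtf (insert u VL) VR e + (if e = s(u, v) then 1 else 0) := by
  induction e using Sym2.ind with
  | _ a b =>
    rw [Sym2.mk_isDiag_iff] at hd
    by_cases hau : a = u <;> by_cases hbu : b = u <;> by_cases hav : a = v <;>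
      by_cases hbv : b = v <;> subst_vars <;>
      simp_all only [wtf_mk, Finset.mem_insert, Sym2.eq, Sym2.rel_iff', Prod.mk.injEq,
        Prod.swap_prod_mk, ne_eq, not_false_eq_true, or_false, false_or, or_true, true_or,
        not_true_eq_false, if_true, if_false] <;> split_ifs <;>
      first | tauto | norm_num

/-- The edge set of `G` as a `Finset`. -/
noncomputable def Egs (G : SimpleGraph V) : Finset (Sym2 V) := (Set.toFinite G.edgeSet).toFinset

lemma mem_Egs {G : SimpleGraph V} {e : Sym2 V} : e ∈ Egs G ↔ e ∈ G.edgeSet :=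
  Set.Finite.mem_toFinset _

lemma not_isDiag_of_mem_Egs {G : SimpleGraph V} {e : Sym2 V} (he : e ∈ Egs G) : ¬ e.IsDiag :=
  G.not_isDiag_of_mem_edgeSet (mem_Egs.mp he)

/-- The Erdős–Selfridge potential. -/
noncomputable def pot (G : SimpleGraph V) (VL VR : Finset V) : ℤ :=
  ∑ e ∈ Egs G, wtf VL VR e

lemma pot_insertR_le (G : SimpleGraph V) (VL VR : Finset V) (v : V) :
    pot G VL (insert v VR) ≤ pot G VL VR :=
  Finset.sum_le_sum fun e _ => wtf_insertR_le VL VR v e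

lemma pot_le_insertL (G : SimpleGraph V) (VL VR : Finset V) (u : V) :
    pot G VL VR ≤ pot G (insert u VL) VR :=
  Finset.sum_le_sum fun e _ => wtf_le_insertL VL VR u e

lemma pot_I1 (G : SimpleGraph V) (VL VR : Finset V) (u v : V) :
    pot G (insert u VL) (insert v VR) + pot G VL VR ≤
      pot G (insert u VL) VR + pot G VL (insert v VR) := by
  have h := Finset.sum_le_sum (s := Egs G) (fun e _ => wtf_I1 VL VR u v e)
  simpa only [pot, Finset.sum_add_distrib] using h

lemma pot_EQ (G : SimpleGraph V) (VL VR : Finset V) {u : V} (hu : u ∉ VL) :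
    pot G (insert u VL) VR + pot G VL (insert u VR) = 2 * pot G VL VR := by
  have h : ∀ e ∈ Egs G, wtf (insert u VL) VR e + wtf VL (insert u VR) e
      = 2 * wtf VL VR e := fun e he => wtf_EQ VL VR hu (not_isDiag_of_mem_Egs he)
  rw [pot, pot, pot, ← Finset.sum_add_distrib, Finset.mul_sum]
  exact Finset.sum_congr rfl h

lemma pot_I2 (G : SimpleGraph V) (VL VR : Finset V) {u v : V}
    (hu : u ∉ VL) (hv : v ∉ VL) (hvu : v ≠ u) :
    pot G (insert v (insert u VL)) VR + pot G VL VR ≤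
      pot G (insert v VL) VR + pot G (insert u VL) VR + 1 := by
  classical
  have h2 := Finset.sum_le_sum (s := Egs G)
    (fun e he => wtf_I2 VL VR hu hv hvu (not_isDiag_of_mem_Egs he))
  have h1 : (∑ e ∈ Egs G, if e = s(u,v) then (1:ℤ) else 0) ≤ 1 := by
    rw [Finset.sum_ite_eq' (Egs G) (s(u,v)) (fun _ => (1:ℤ))]
    split_ifs <;> norm_num
  simp only [Finset.sum_add_distrib] at h2
  simp only [pot]
  linarith

lemma pot_full (G : SimpleGraph V) {VL VR : Finset V}
    (hfull : VL ∪ VR = Finset.univ) (hdis : Disjoint VL VR) :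
    pot G VL VR = 4 * mbScore G VL VR := by
  classical
  have hwt : ∀ e ∈ Egs G, wtf VL VR e = if (∀ w ∈ e, w ∈ VL) then 4 else 0 := by
    intro e he
    induction e using Sym2.ind with
    | _ a b =>
      have hmem : ∀ x : V, x ∉ VL → x ∈ VR := by
        intro x hx
        have : x ∈ VL ∪ VR := hfull ▸ Finset.mem_univ x
        simpa [Finset.mem_union, hx] using this
      have hnR : ∀ x : V, x ∈ VL → x ∉ VR := fun x hx => Finset.disjoint_left.mp hdis hx
      by_cases ha : a ∈ VL <;> by_cases hb : b ∈ VL <;>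
        simp_all [wtf_mk, Sym2.mem_iff, hnR, hmem] <;> tauto
  have hset : {e ∈ G.edgeSet | ∀ w ∈ e, w ∈ VL}
      = ↑((Egs G).filter (fun e => ∀ w ∈ e, w ∈ VL)) := by
    ext e; simp [mem_Egs]
  rw [mbScore, hset, Set.ncard_coe_finset]
  calc pot G VL VR = ∑ e ∈ Egs G, if (∀ w ∈ e, w ∈ VL) then (4:ℤ) else 0 :=
        Finset.sum_congr rfl hwt
    _ = ∑ _e ∈ (Egs G).filter (fun e => ∀ w ∈ e, w ∈ VL), (4:ℤ) :=
        (Finset.sum_filter _ _).symm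
    _ = 4 * ((Egs G).filter (fun e => ∀ w ∈ e, w ∈ VL)).card := by
        rw [Finset.sum_const]; push_cast; ring

lemma mem_compl_union {VL VR : Finset V} {u : V} (hu : u ∈ (VL ∪ VR)ᶜ) :
    u ∉ VL ∧ u ∉ VR := by
  rw [Finset.mem_compl, Finset.mem_union] at hu; tauto

lemma compl_insert_left (VL VR : Finset V) (u : V) :
    (insert u VL ∪ VR)ᶜ = ((VL ∪ VR)ᶜ).erase u := by
  rw [Finset.insert_union, Finset.compl_insert]

lemma compl_insert_right (VL VR : Finset V) (u : V) :
    (VL ∪ insert u VR)ᶜ = ((VL ∪ VR)ᶜ).erase u := by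
  rw [Finset.union_insert, Finset.compl_insert]

/-- Breaker moving first keeps the final score at most a quarter of the potential. -/
lemma upper_bound_aux (G : SimpleGraph V) :
    ∀ k (VL VR : Finset V), ((VL ∪ VR)ᶜ).card = k → Disjoint VL VR →
      4 * gameValue (mbScore G) false VL VR ≤ pot G VL VR := by
  intro k
  induction k using Nat.strong_induction_on with
  | _ k IH =>
    intro VL VR hcard hdis
    by_cases hemp : (VL ∪ VR)ᶜ = ∅
    · rw [gameValue_of_empty _ _ hemp,
        pot_full G (by rwa [← Finset.compl_eq_empty_iff]) hdis]
    · rw [gameValue_false_of_ne _ hemp]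
      obtain ⟨vs, hvs, hmin⟩ := Finset.exists_min_image ((VL ∪ VR)ᶜ)
        (fun v => pot G VL (insert v VR))
        (Finset.nonempty_iff_ne_empty.mpr hemp)
      obtain ⟨hvsL, hvsR⟩ := mem_compl_union hvs
      have hk1 : 1 ≤ k := by
        have := Finset.card_pos.mpr ⟨vs, hvs⟩; omega
      have hinf := Finset.inf'_le
        (fun v : {x // x ∈ (VL ∪ VR)ᶜ} => gameValue (mbScore G) true VL (insert v.1 VR))
        (Finset.mem_attach _ ⟨vs, hvs⟩)
      have hdis' : Disjoint VL (insert vs VR) := by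
        rw [Finset.disjoint_insert_right]; exact ⟨hvsL, hdis⟩
      have hmain : 4 * gameValue (mbScore G) true VL (insert vs VR) ≤ pot G VL VR := by
        by_cases hemp2 : (VL ∪ insert vs VR)ᶜ = ∅
        · rw [gameValue_of_empty _ _ hemp2,
            ← pot_full G (by rwa [← Finset.compl_eq_empty_iff]) hdis']
          exact pot_insertR_le G VL VR vs
        · rw [gameValue_true_of_ne _ hemp2]
          obtain ⟨⟨u, hu⟩, -, hEq⟩ := Finset.exists_mem_eq_sup'
            (Finset.attach_nonempty_iff.mpr (Finset.nonempty_iff_ne_empty.mpr hemp2))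
            (fun v : {x // x ∈ (VL ∪ insert vs VR)ᶜ} =>
              gameValue (mbScore G) false (insert v.1 VL) (insert vs VR))
          rw [hEq]
          obtain ⟨huL, huR'⟩ := mem_compl_union hu
          have huvs : u ≠ vs := fun h => huR' (by simp [h])
          have huR : u ∉ VR := fun h => huR' (Finset.mem_insert_of_mem h)
          have huF : u ∈ (VL ∪ VR)ᶜ := by
            rw [Finset.mem_compl, Finset.mem_union]; tauto
          have hcard2 : ((insert u VL ∪ insert vs VR)ᶜ).card = k - 2 := by
            rw [compl_insert_left, compl_insert_right,
              Finset.card_erase_of_mem (Finset.mem_erase.mpr ⟨huvs, huF⟩),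
              Finset.card_erase_of_mem hvs, hcard]
            omega
          have hk2 : k - 2 < k := by omega
          have hdis2 : Disjoint (insert u VL) (insert vs VR) := by
            rw [Finset.disjoint_insert_left]
            exact ⟨huR', hdis'⟩
          have hIH := IH (k - 2) hk2 (insert u VL) (insert vs VR) hcard2 hdis2
          have h1 := pot_I1 G VL VR u vs
          have h2 := pot_EQ G VL VR huL
          have h3 := hmin u huF
          linarith
      linarith
        [mul_le_mul_of_nonneg_left hinf (by norm_num : (0:ℤ) ≤ 4)]

/-- Maker moving first loses at most half the number of free vertices from the potential. -/
lemma lower_bound_aux (G : SimpleGraph V) :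
    ∀ k (VL VR : Finset V), ((VL ∪ VR)ᶜ).card = k → Disjoint VL VR →
      pot G VL VR - (k / 2 : ℕ) ≤ 4 * gameValue (mbScore G) true VL VR := by
  intro k
  induction k using Nat.strong_induction_on with
  | _ k IH =>
    intro VL VR hcard hdis
    by_cases hemp : (VL ∪ VR)ᶜ = ∅
    · rw [gameValue_of_empty _ _ hemp,
        pot_full G (by rwa [← Finset.compl_eq_empty_iff]) hdis]
      have : (0:ℤ) ≤ (k / 2 : ℕ) := Int.natCast_nonneg _
      linarith
    · rw [gameValue_true_of_ne _ hemp]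
      obtain ⟨us, hus, hmax⟩ := Finset.exists_max_image ((VL ∪ VR)ᶜ)
        (fun u => pot G (insert u VL) VR)
        (Finset.nonempty_iff_ne_empty.mpr hemp)
      obtain ⟨husL, husR⟩ := mem_compl_union hus
      have hk1 : 1 ≤ k := by
        have := Finset.card_pos.mpr ⟨us, hus⟩; omega
      have hsup := Finset.le_sup'
        (fun v : {x // x ∈ (VL ∪ VR)ᶜ} => gameValue (mbScore G) false (insert v.1 VL) VR)
        (Finset.mem_attach _ ⟨us, hus⟩)
      have hdis' : Disjoint (insert us VL) VR := by
        rw [Finset.disjoint_insert_left]; exact ⟨husR, hdis⟩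
      have hmain : pot G VL VR - (k / 2 : ℕ) ≤
          4 * gameValue (mbScore G) false (insert us VL) VR := by
        by_cases hemp2 : (insert us VL ∪ VR)ᶜ = ∅
        · rw [gameValue_of_empty _ _ hemp2,
            ← pot_full G (by rwa [← Finset.compl_eq_empty_iff]) hdis']
          have h1 := pot_le_insertL G VL VR us
          have : (0:ℤ) ≤ (k / 2 : ℕ) := Int.natCast_nonneg _
          linarith
        · rw [gameValue_false_of_ne _ hemp2]
          obtain ⟨⟨v, hv⟩, -, hEq⟩ := Finset.exists_mem_eq_inf'
            (Finset.attach_nonempty_iff.mpr (Finset.nonempty_iff_ne_empty.mpr hemp2))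
            (fun w : {x // x ∈ (insert us VL ∪ VR)ᶜ} =>
              gameValue (mbScore G) true (insert us VL) (insert w.1 VR))
          rw [hEq]
          obtain ⟨hvL', hvR⟩ := mem_compl_union hv
          have hvus : v ≠ us := fun h => hvL' (by simp [h])
          have hvL : v ∉ VL := fun h => hvL' (Finset.mem_insert_of_mem h)
          have hvF : v ∈ (VL ∪ VR)ᶜ := by
            rw [Finset.mem_compl, Finset.mem_union]; tauto
          have hcard2 : ((insert us VL ∪ insert v VR)ᶜ).card = k - 2 := by
            rw [compl_insert_right, compl_insert_left,
              Finset.card_erase_of_mem (Finset.mem_erase.mpr ⟨hvus, hvF⟩),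
              Finset.card_erase_of_mem hus, hcard]
            omega
          have hk2 : k - 2 < k := by omega
          have hdis2 : Disjoint (insert us VL) (insert v VR) := by
            rw [Finset.disjoint_insert_right]
            exact ⟨hvL', hdis'⟩
          have hIH := IH (k - 2) hk2 (insert us VL) (insert v VR) hcard2 hdis2
          have hEQ2 := pot_EQ G (insert us VL) VR (u := v) hvL'
          have hI2 := pot_I2 G VL VR husL hvL hvus
          have h3 := hmax v hvF
          have hdiv : ((k - 2) / 2 : ℕ) + 1 = (k / 2 : ℕ) ∨ k = 1 := by omega
          rcases hdiv with hdiv | rfl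
          · have : (((k - 2) / 2 : ℕ) : ℤ) + 1 = ((k / 2 : ℕ) : ℤ) := by
              exact_mod_cast congrArg (Nat.cast : ℕ → ℤ) hdiv
            linarith
          · -- k = 1 impossible here: two distinct free vertices
            exfalso
            have h2 : 1 < ((VL ∪ VR)ᶜ).card :=
              Finset.one_lt_card.mpr ⟨us, hus, v, hvF, fun h => hvus h.symm⟩
            omega
      linarith

end ESAux

/-- In Maker-Breaker Incidence on a graph with `n` vertices and `m`
edges, `Ls(G) ≥ m/4 - n/8` and `Rs(G) ≤ m/4`. -/
theorem makerBreaker_incidence_erdos_selfridge_bounds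
    {V : Type} [Fintype V] [DecidableEq V] (G : SimpleGraph V) :
    (G.edgeSet.ncard : ℚ) / 4 - (Fintype.card V : ℚ) / 8 ≤ (LsMB G : ℚ) ∧
    (RsMB G : ℚ) ≤ (G.edgeSet.ncard : ℚ) / 4 := by
  classical
  have hcompl : ((∅ ∪ ∅ : Finset V)ᶜ).card = Fintype.card V := by simp
  have hdis : Disjoint (∅ : Finset V) (∅ : Finset V) := by simp
  have hpot0 : pot G ∅ ∅ = (G.edgeSet.ncard : ℤ) := by
    have hwt : ∀ e ∈ Egs G, wtf (∅ : Finset V) ∅ e = 1 := by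
      intro e _
      induction e using Sym2.ind with
      | _ a b => simp
    rw [pot, Finset.sum_congr rfl hwt, Finset.sum_const, nsmul_eq_mul, mul_one]
    norm_cast
    rw [Egs]
    exact (Set.ncard_eq_toFinset_card _ _).symm
  have hL := lower_bound_aux G (Fintype.card V) ∅ ∅ hcompl hdis
  have hR := upper_bound_aux G (Fintype.card V) ∅ ∅ hcompl hdis
  rw [hpot0] at hL hR
  rw [LsMB, RsMB] at *
  constructor
  · have hq : (G.edgeSet.ncard : ℚ) - ((Fintype.card V / 2 : ℕ) : ℚ) ≤
        4 * (gameValue (mbScore G) true ∅ ∅ : ℚ) := by exact_mod_cast hL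
    have hhalf : ((Fintype.card V / 2 : ℕ) : ℚ) ≤ (Fintype.card V : ℚ) / 2 :=
      Nat.cast_div_le
    linarith
  · have hq : 4 * (gameValue (mbScore G) false ∅ ∅ : ℚ) ≤ (G.edgeSet.ncard : ℚ) := by
      exact_mod_cast hR
    linarith
end

section
/- Let H be the disjoint union of 2k paths on three vertices (k ≥ 1). In Maker-Breaker Incidence on H with Breaker moving first, the optimal score satisfies Rs(H) ≤ k, i.e. Breaker can ensure Maker scores at most k points; this matches the upper bound m/4 = 4k/4 = k. -/
/-- The disjoint union of `m` copies of the path on three vertices. -/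
def unionP3 (m : ℕ) : SimpleGraph (Fin m × Fin 3) where
  Adj p q := p.1 = q.1 ∧ (SimpleGraph.pathGraph 3).Adj p.2 q.2
  symm := ⟨fun p q h => ⟨h.1.symm, (SimpleGraph.pathGraph 3).symm.symm _ _ h.2⟩⟩
  loopless := ⟨fun p h => (SimpleGraph.pathGraph 3).loopless.irrefl p.2 h.2⟩

/-!
Breaker uses a pairing strategy: the two leaves of each path are partners, and so are the centres
of the paths `i` and `2k - 1 - i`. Whenever Maker claims a vertex whose partner is free, Breaker
claims the partner; otherwise Breaker plays anywhere. Maker then never owns both vertices of a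
pair, so she owns at most one leaf of each path and at most `k` of the `2k` centres. Every edge
joins a centre to a leaf of its path, hence Maker owns at most one edge per centre she holds.
-/

theorem gameValue_le_of_invariant {V : Type} [Fintype V] [DecidableEq V]
    {score : Finset V → Finset V → ℤ} {B : ℤ} (I : Bool → Finset V → Finset V → Prop)
    (terminal : ∀ b VL VR, (VL ∪ VR)ᶜ = ∅ → I b VL VR → score VL VR ≤ B)
    (breaker_move : ∀ VL VR, (VL ∪ VR)ᶜ ≠ ∅ → I false VL VR →
      ∃ v ∈ (VL ∪ VR)ᶜ, I true VL (insert v VR))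
    (maker_move : ∀ VL VR, I true VL VR → ∀ v ∈ (VL ∪ VR)ᶜ, I false (insert v VL) VR)
    (b : Bool) (VL VR : Finset V) (hI : I b VL VR) :
    gameValue score b VL VR ≤ B := by
  rw [gameValue]
  by_cases hfull : (VL ∪ VR)ᶜ = ∅
  · rw [dif_pos hfull]
    exact terminal b VL VR hfull hI
  rw [dif_neg hfull]
  cases b
  · obtain ⟨v, hv, hI'⟩ := breaker_move VL VR hfull hI
    exact (Finset.inf'_le _ (Finset.mem_attach _ ⟨v, hv⟩)).trans
      (gameValue_le_of_invariant I terminal breaker_move maker_move true VL _ hI')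
  · refine Finset.sup'_le (Finset.attach_nonempty_iff.2 (Finset.nonempty_iff_ne_empty.2 hfull)) _
      fun ⟨v, hv⟩ _ => ?_
    exact gameValue_le_of_invariant I terminal breaker_move maker_move false _ VR
      (maker_move VL VR hI v hv)
termination_by ((VL ∪ VR)ᶜ).card
decreasing_by
  all_goals
    simp only [Finset.insert_union, Finset.union_insert, Finset.compl_insert]
    exact Finset.card_erase_lt_of_mem hv

section Pairing

variable {V : Type} (σ : V → V)

/-- The position invariant of the pairing strategy. With Maker to move (`true`) every Maker vertex
has its partner claimed by Breaker; with Breaker to move (`false`) at most one Maker vertex is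
unanswered and Maker holds no complete pair. -/
def PairingInvariant : Bool → Finset V → Finset V → Prop
  | true, VL, VR => Disjoint VL VR ∧ ∀ v ∈ VL, σ v ∈ VR
  | false, VL, VR => Disjoint VL VR ∧ (∀ v ∈ VL, σ v ∉ VL) ∧
      ∀ u ∈ VL, ∀ v ∈ VL, σ u ∉ VR → σ v ∉ VR → u = v

variable {σ}

lemma PairingInvariant.pairFree {b : Bool} {VL VR : Finset V}
    (h : PairingInvariant σ b VL VR) : ∀ v ∈ VL, σ v ∉ VL := by
  cases b
  · exact h.2.1
  · exact fun v hv hσv => Finset.disjoint_left.1 h.1 hσv (h.2 v hv)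

variable [Fintype V] [DecidableEq V]

lemma PairingInvariant.insert_left (hσ : Function.Involutive σ) (hfix : ∀ v, σ v ≠ v)
    {VL VR : Finset V} (h : PairingInvariant σ true VL VR) {v : V} (hv : v ∈ (VL ∪ VR)ᶜ) :
    PairingInvariant σ false (insert v VL) VR := by
  obtain ⟨hdisj, hans⟩ := h
  have hvR : v ∉ VR := fun h => Finset.mem_compl.1 hv (Finset.mem_union_right _ h)
  have hσv : σ v ∉ VL := fun hσv => hvR (hσ v ▸ hans _ hσv)
  have hσu : ∀ u ∈ VL, σ u ∉ insert v VL := fun u hu hmem => by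
    rcases Finset.mem_insert.1 hmem with hmem | hmem
    · exact hvR (hmem ▸ hans u hu)
    · exact Finset.disjoint_left.1 hdisj hmem (hans u hu)
  refine ⟨Finset.disjoint_insert_left.2 ⟨hvR, hdisj⟩, ?_, ?_⟩
  · rw [Finset.forall_mem_insert]
    exact ⟨fun h => (Finset.mem_insert.1 h).elim (hfix v) hσv, hσu⟩
  · intro u hu w hw hσu hσw
    rcases Finset.mem_insert.1 hu with rfl | hu
    · rcases Finset.mem_insert.1 hw with rfl | hw
      · rfl
      · exact absurd (hans w hw) hσw
    · exact absurd (hans u hu) hσu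

lemma PairingInvariant.exists_insert_right {VL VR : Finset V}
    (h : PairingInvariant σ false VL VR) (hfree : (VL ∪ VR)ᶜ ≠ ∅) :
    ∃ v ∈ (VL ∪ VR)ᶜ, PairingInvariant σ true VL (insert v VR) := by
  obtain ⟨hdisj, hpair, hunique⟩ := h
  by_cases hall : ∀ v ∈ VL, σ v ∈ VR
  · obtain ⟨v, hv⟩ := Finset.nonempty_iff_ne_empty.2 hfree
    have hvL : v ∉ VL := fun h => Finset.mem_compl.1 hv (Finset.mem_union_left _ h)
    exact ⟨v, hv, Finset.disjoint_insert_right.2 ⟨hvL, hdisj⟩,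
      fun u hu => Finset.mem_insert_of_mem (hall u hu)⟩
  · push Not at hall
    obtain ⟨w, hw, hσw⟩ := hall
    refine ⟨σ w, ?_, Finset.disjoint_insert_right.2 ⟨hpair w hw, hdisj⟩, fun u hu => ?_⟩
    · simp only [Finset.mem_compl, Finset.mem_union, not_or]
      exact ⟨hpair w hw, hσw⟩
    · by_cases hσu : σ u ∈ VR
      · exact Finset.mem_insert_of_mem hσu
      · rw [hunique u hu w hw hσu hσw]
        exact Finset.mem_insert_self _ _

theorem gameValue_le_of_pairing (hσ : Function.Involutive σ) (hfix : ∀ v, σ v ≠ v)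
    {score : Finset V → Finset V → ℤ} {B : ℤ}
    (hscore : ∀ VL VR : Finset V, (∀ v ∈ VL, σ v ∉ VL) → score VL VR ≤ B) (b : Bool) :
    gameValue score b ∅ ∅ ≤ B := by
  refine gameValue_le_of_invariant (PairingInvariant σ)
    (fun _ VL VR _ h => hscore VL VR h.pairFree)
    (fun _ _ hfree h => h.exists_insert_right hfree)
    (fun _ _ h _ hv => h.insert_left hσ hfix hv) b ∅ ∅ ?_
  cases b <;> simp [PairingInvariant]

end Pairing

lemma two_mul_card_le_of_apply_notMem {α : Type*} [Fintype α] [DecidableEq α] {σ : α → α}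
    (hσ : Function.Injective σ) {s : Finset α} (hs : ∀ a ∈ s, σ a ∉ s) :
    2 * s.card ≤ Fintype.card α := by
  have hdisj : Disjoint s (s.image σ) := by
    refine Finset.disjoint_left.2 fun a ha ha' => ?_
    obtain ⟨b, hb, rfl⟩ := Finset.mem_image.1 ha'
    exact hs b hb ha
  calc 2 * s.card = (s ∪ s.image σ).card := by
        rw [Finset.card_union_of_disjoint hdisj, Finset.card_image_of_injective s hσ, two_mul]
    _ ≤ Fintype.card α := Finset.card_le_univ _

def unionP3Pairing (m : ℕ) (p : Fin m × Fin 3) : Fin m × Fin 3 :=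
  (if p.2 = 1 then p.1.rev else p.1, 2 - p.2)

lemma unionP3Pairing_involutive (m : ℕ) : Function.Involutive (unionP3Pairing m) := by
  rintro ⟨i, a⟩
  fin_cases a <;> simp [unionP3Pairing]

lemma unionP3Pairing_ne_self (k : ℕ) (p : Fin (2 * k) × Fin 3) :
    unionP3Pairing (2 * k) p ≠ p := by
  obtain ⟨i, a⟩ := p
  fin_cases a <;> simp [unionP3Pairing, Fin.ext_iff, Fin.val_rev]
  omega

lemma pathGraph_three_adj_iff {a b : Fin 3} :
    (SimpleGraph.pathGraph 3).Adj a b ↔ a = 1 ∧ b ≠ 1 ∨ b = 1 ∧ a ≠ 1 := by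
  rw [SimpleGraph.pathGraph_adj]
  revert a b
  decide

lemma unionP3_edge_eq {m : ℕ} {e : Sym2 (Fin m × Fin 3)} (he : e ∈ (unionP3 m).edgeSet) :
    ∃ p : Fin m × Fin 3, p.2 ≠ 1 ∧ e = s((p.1, 1), p) := by
  induction e using Sym2.ind with
  | _ p q =>
  obtain ⟨hpq, hadj⟩ := he
  rcases pathGraph_three_adj_iff.1 hadj with ⟨hp, hq⟩ | ⟨hq, hp⟩
  · exact ⟨q, hq, by rw [← hpq, ← hp]⟩
  · exact ⟨p, hp, by rw [hpq, ← hq, Sym2.eq_swap]⟩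

theorem two_mul_mbScore_unionP3_le {m : ℕ} {VL : Finset (Fin m × Fin 3)}
    (hVL : ∀ v ∈ VL, unionP3Pairing m v ∉ VL) (VR : Finset (Fin m × Fin 3)) :
    2 * mbScore (unionP3 m) VL VR ≤ m := by
  set centres : Finset (Fin m) := {i | (i, 1) ∈ VL}
  have hcentres : 2 * centres.card ≤ m := by
    simpa using two_mul_card_le_of_apply_notMem Fin.rev_injective (s := centres)
      fun i hi hrev => hVL (i, 1) (by simpa [centres] using hi)
        (by simpa [centres, unionP3Pairing] using hrev)
  set A : Set (Fin m × Fin 3) := {p | p.2 ≠ 1 ∧ p ∈ VL ∧ (p.1, 1) ∈ VL}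
  have hedges : {e ∈ (unionP3 m).edgeSet | ∀ w ∈ e, w ∈ VL} ⊆ (fun p => s((p.1, 1), p)) '' A := by
    rintro e ⟨he, heVL⟩
    obtain ⟨p, hp, rfl⟩ := unionP3_edge_eq he
    exact ⟨p, ⟨hp, heVL _ (Sym2.mem_mk_right _ _), heVL _ (Sym2.mem_mk_left _ _)⟩, rfl⟩
  -- Maker's two leaves of one path would be partners.
  have hA : Set.InjOn Prod.fst A := by
    rintro ⟨i, a⟩ ⟨ha, hpL, -⟩ ⟨j, b⟩ ⟨hb, hqL, -⟩ (rfl : i = j)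
    by_contra hne
    have hleaves : ∀ a b : Fin 3, a ≠ 1 → b ≠ 1 → a ≠ b → b = 2 - a := by decide
    have hba := hleaves a b ha hb fun h => hne (h ▸ rfl)
    exact hVL _ hpL (by simpa [unionP3Pairing, ha, ← hba] using hqL)
  have hcount := calc
    {e ∈ (unionP3 m).edgeSet | ∀ w ∈ e, w ∈ VL}.ncard ≤ ((fun p => s((p.1, 1), p)) '' A).ncard :=
      Set.ncard_le_ncard hedges
    _ ≤ A.ncard := Set.ncard_image_le (Set.toFinite A)
    _ ≤ (centres : Set (Fin m)).ncard :=
      Set.ncard_le_ncard_of_injOn Prod.fst (fun p hp => by simpa [centres] using hp.2.2) hA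
    _ = centres.card := Set.ncard_coe_finset centres
  unfold mbScore
  omega

theorem makerBreaker_incidence_union_of_P3_general (k : ℕ) :
    RsMB (unionP3 (2 * k)) ≤ (k : ℤ) :=
  gameValue_le_of_pairing (unionP3Pairing_involutive _) (unionP3Pairing_ne_self k)
    (fun VL VR hVL => by
      have h := two_mul_mbScore_unionP3_le hVL VR
      push_cast at h
      omega)
    false

/-- On the disjoint union of `2k` paths on three vertices, Breaker
moving first can ensure Maker scores at most `k` points (matching `m/4 = k`). -/
theorem makerBreaker_incidence_union_of_P3 (k : ℕ) (hk : 1 ≤ k) :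
    RsMB (unionP3 (2 * k)) ≤ (k : ℤ) :=
  makerBreaker_incidence_union_of_P3_general k
end

section
/- Equivalent free vertices can be split between the players without changing the value: let G be a finite simple graph, P = (G, V_L, V_R) a Maker-Breaker Incidence position, and v_1, v_2 free vertices with N(v_1) ∩ V_F ∖ {v_2} = N(v_2) ∩ V_F ∖ {v_1} and |N(v_1) ∩ V_L| = |N(v_2) ∩ V_L| (where V_F is the set of free vertices). Then Ls(P) = Ls(G, V_L ∪ {v_1}, V_R ∪ {v_2}) and Rs(P) = Rs(G, V_L ∪ {v_1}, V_R ∪ {v_2}). -/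
/-!
Splitting two equivalent free vertices `v₁, v₂` is the pairing strategy "whenever the opponent
claims one of `v₁, v₂`, claim the other". It costs neither player anything because the two
ways of splitting the pair, `(L ∪ {v₁}, R ∪ {v₂})` and `(L ∪ {v₂}, R ∪ {v₁})`, have the same
value: the transposition of `v₁` and `v₂` carries one game onto the other, and it preserves the
score of every end position reachable from them, since `v₁` and `v₂` have equally many
neighbours among Maker's remaining vertices. Every other move keeps `v₁` and `v₂` equivalent,
so the claim follows by induction on the number of free vertices.
-/

open Finset

namespace Finset

variable {α : Type*} [DecidableEq α]

theorem notMem_insert_union {L R : Finset α} {a v : α} (hv : v ∉ L ∪ R) (hva : v ≠ a) :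
    v ∉ insert a L ∪ R := by
  simp_all

theorem notMem_union_insert {L R : Finset α} {a v : α} (hv : v ∉ L ∪ R) (hva : v ≠ a) :
    v ∉ L ∪ insert a R := by
  simp_all

theorem mem_compl_insert_union_insert [Fintype α] {L R : Finset α} {a b v : α} :
    v ∈ (insert a L ∪ insert b R)ᶜ ↔ v ∉ L ∪ R ∧ v ≠ a ∧ v ≠ b := by
  simp only [mem_compl, mem_union, mem_insert]
  tauto

theorem compl_eq_singleton_of_compl_insert_eq_empty [Fintype α] {X : Finset α} {v : α}
    (hv : v ∉ X) (h : (insert v X)ᶜ = ∅) : Xᶜ = {v} := by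
  rw [compl_insert, erase_eq_empty_iff] at h
  exact h.resolve_left (ne_empty_of_mem (mem_compl.2 hv))

theorem map_swap_of_notMem {a b : α} {A : Finset α} (ha : a ∉ A) (hb : b ∉ A) :
    A.map (Equiv.swap a b).toEmbedding = A := by
  rw [map_eq_image]
  exact (image_congr fun x hx => Equiv.swap_apply_of_ne_of_ne (ne_of_mem_of_not_mem hx ha)
    (ne_of_mem_of_not_mem hx hb)).trans image_id

theorem map_swap_insert {a b : α} {A : Finset α} (ha : a ∉ A) (hb : b ∉ A) :
    (insert a A).map (Equiv.swap a b).toEmbedding = insert b A := by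
  rw [map_insert, map_swap_of_notMem ha hb, Equiv.coe_toEmbedding, Equiv.swap_apply_left]

end Finset

section GameValue

variable {V : Type} [Fintype V] [DecidableEq V]

theorem position_induction {Q : Finset V → Finset V → Prop}
    (step : ∀ L R, (∀ v ∉ L ∪ R, Q (insert v L) R ∧ Q L (insert v R)) → Q L R)
    (L R : Finset V) : Q L R := by
  induction hn : #(L ∪ R)ᶜ using Nat.strong_induction_on generalizing L R with
  | _ n ih =>
  refine step L R fun v hv => ⟨ih _ ?_ _ _ rfl, ih _ ?_ _ _ rfl⟩
  · rw [← hn, insert_union, compl_insert]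
    exact card_erase_lt_of_mem (mem_compl.2 hv)
  · rw [← hn, union_insert, compl_insert]
    exact card_erase_lt_of_mem (mem_compl.2 hv)

variable (s : Finset V → Finset V → ℤ)

theorem gameValue_of_compl_eq_empty_s12 {t : Bool} {L R : Finset V} (h : (L ∪ R)ᶜ = ∅) :
    gameValue s t L R = s L R := by
  rw [gameValue, dif_pos h]

theorem gameValue_true_eq_sup' {L R : Finset V} (hF : (L ∪ R)ᶜ.Nonempty) :
    gameValue s true L R = (L ∪ R)ᶜ.sup' hF fun v => gameValue s false (insert v L) R := by
  rw [gameValue, dif_neg hF.ne_empty, if_pos rfl]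
  exact (sup'_comp_eq_map (f := .subtype _) (fun v => gameValue s false (insert v L) R) _).trans
    (sup'_congr _ attach_map_val fun _ _ => rfl)

theorem gameValue_false_eq_inf' {L R : Finset V} (hF : (L ∪ R)ᶜ.Nonempty) :
    gameValue s false L R = (L ∪ R)ᶜ.inf' hF fun v => gameValue s true L (insert v R) := by
  rw [gameValue, dif_neg hF.ne_empty, if_neg Bool.false_ne_true]
  exact (inf'_comp_eq_map (f := .subtype _) (fun v => gameValue s true L (insert v R)) _).trans
    (inf'_congr _ attach_map_val fun _ _ => rfl)

theorem gameValue_false_insert_left_le {L R : Finset V} {v : V} (hv : v ∉ L ∪ R) :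
    gameValue s false (insert v L) R ≤ gameValue s true L R := by
  rw [gameValue_true_eq_sup' s ⟨v, mem_compl.2 hv⟩]
  exact le_sup' (fun w => gameValue s false (insert w L) R) (mem_compl.2 hv)

theorem gameValue_false_le_insert_right {L R : Finset V} {v : V} (hv : v ∉ L ∪ R) :
    gameValue s false L R ≤ gameValue s true L (insert v R) := by
  rw [gameValue_false_eq_inf' s ⟨v, mem_compl.2 hv⟩]
  exact inf'_le (fun w => gameValue s true L (insert w R)) (mem_compl.2 hv)

theorem gameValue_true_eq_of_compl_eq_singleton {L R : Finset V} {v : V}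
    (h : (L ∪ R)ᶜ = {v}) : gameValue s true L R = gameValue s false (insert v L) R := by
  rw [gameValue_true_eq_sup' s (h ▸ singleton_nonempty v), sup'_congr _ h fun _ _ => rfl,
    sup'_singleton]

theorem gameValue_false_eq_of_compl_eq_singleton {L R : Finset V} {v : V}
    (h : (L ∪ R)ᶜ = {v}) : gameValue s false L R = gameValue s true L (insert v R) := by
  rw [gameValue_false_eq_inf' s (h ▸ singleton_nonempty v), inf'_congr _ h fun _ _ => rfl,
    inf'_singleton]

end GameValue

section Invariance

variable {V : Type} [Fintype V] [DecidableEq V]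

theorem gameValue_congr_of_invariant (s s' : Finset V → Finset V → ℤ)
    (P : Finset V → Finset V → Prop)
    (hP : ∀ L R v, P L R → v ∉ L ∪ R → P (insert v L) R ∧ P L (insert v R))
    (hs : ∀ L R, P L R → (L ∪ R)ᶜ = ∅ → s L R = s' L R)
    (t : Bool) {L R : Finset V} (hPLR : P L R) :
    gameValue s t L R = gameValue s' t L R := by
  induction L, R using position_induction generalizing t with
  | step L R ih =>
  by_cases hF : (L ∪ R)ᶜ = ∅
  · rw [gameValue_of_compl_eq_empty_s12 s hF, gameValue_of_compl_eq_empty_s12 s' hF, hs L R hPLR hF]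
  replace hF := nonempty_iff_ne_empty.2 hF
  cases t with
  | true =>
    rw [gameValue_true_eq_sup' s hF, gameValue_true_eq_sup' s' hF]
    exact sup'_congr hF rfl fun v hv =>
      (ih v (mem_compl.1 hv)).1 false (hP L R v hPLR (mem_compl.1 hv)).1
  | false =>
    rw [gameValue_false_eq_inf' s hF, gameValue_false_eq_inf' s' hF]
    exact inf'_congr hF rfl fun v hv =>
      (ih v (mem_compl.1 hv)).2 true (hP L R v hPLR (mem_compl.1 hv)).2

theorem gameValue_map_equiv {W : Type} [Fintype W] [DecidableEq W] (e : V ≃ W)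
    (s : Finset W → Finset W → ℤ) (t : Bool) (L R : Finset V) :
    gameValue s t (L.map e.toEmbedding) (R.map e.toEmbedding) =
      gameValue (fun A B => s (A.map e.toEmbedding) (B.map e.toEmbedding)) t L R := by
  induction L, R using position_induction generalizing t with
  | step L R ih =>
  have hF : (L.map e.toEmbedding ∪ R.map e.toEmbedding)ᶜ = (L ∪ R)ᶜ.map e.toEmbedding := by
    ext w
    simp [mem_map_equiv]
  by_cases hF₀ : (L ∪ R)ᶜ = ∅
  · rw [gameValue_of_compl_eq_empty_s12 _ hF₀,
      gameValue_of_compl_eq_empty_s12 _ (by rw [hF, hF₀, map_empty])]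
  replace hF₀ := nonempty_iff_ne_empty.2 hF₀
  have hFe := hF ▸ hF₀.map (f := e.toEmbedding)
  cases t with
  | true =>
    rw [gameValue_true_eq_sup' _ hF₀, gameValue_true_eq_sup' _ hFe,
      sup'_congr hFe hF fun _ _ => rfl, sup'_map]
    refine sup'_congr _ rfl fun v hv => ?_
    rw [Function.comp_apply, ← map_insert]
    exact (ih v (mem_compl.1 hv)).1 false
  | false =>
    rw [gameValue_false_eq_inf' _ hF₀, gameValue_false_eq_inf' _ hFe,
      inf'_congr hFe hF fun _ _ => rfl, inf'_map]
    refine inf'_congr _ rfl fun v hv => ?_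
    rw [Function.comp_apply, ← map_insert]
    exact (ih v (mem_compl.1 hv)).2 true

end Invariance
section Pairing

variable {V : Type} [Fintype V] [DecidableEq V] (s : Finset V → Finset V → ℤ)
  {v₁ v₂ : V} {L R : Finset V}

theorem gameValue_true_eq_insert_insert_of_moves (hne : v₁ ≠ v₂) (h₁ : v₁ ∉ L ∪ R)
    (h₂ : v₂ ∉ L ∪ R)
    (hswap : gameValue s true (insert v₂ L) (insert v₁ R) =
      gameValue s true (insert v₁ L) (insert v₂ R))
    (ih : ∀ v ∉ L ∪ R, v ≠ v₁ → v ≠ v₂ →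
      gameValue s false (insert v L) R = gameValue s false (insert v (insert v₁ L)) (insert v₂ R)) :
    gameValue s true L R = gameValue s true (insert v₁ L) (insert v₂ R) := by
  have h₂L : v₂ ∉ insert v₁ L ∪ R := notMem_insert_union h₂ hne.symm
  rw [gameValue_true_eq_sup' s ⟨v₁, mem_compl.2 h₁⟩]
  apply le_antisymm
  · refine sup'_le _ _ fun v hv => ?_
    rw [mem_compl] at hv
    by_cases hv₁ : v = v₁
    · rw [hv₁]
      exact gameValue_false_le_insert_right s h₂L
    by_cases hv₂ : v = v₂
    · rw [hv₂]
      exact (gameValue_false_le_insert_right s (notMem_insert_union h₁ hne)).trans_eq hswap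
    rw [ih v hv hv₁ hv₂]
    exact gameValue_false_insert_left_le s
      (mem_compl.1 (mem_compl_insert_union_insert.2 ⟨hv, hv₁, hv₂⟩))
  · by_cases hF₂ : (insert v₁ L ∪ insert v₂ R)ᶜ = ∅
    · rw [union_insert] at hF₂
      rw [← gameValue_false_eq_of_compl_eq_singleton s
        (compl_eq_singleton_of_compl_insert_eq_empty h₂L hF₂)]
      exact le_sup' (fun w => gameValue s false (insert w L) R) (mem_compl.2 h₁)
    rw [gameValue_true_eq_sup' s (nonempty_iff_ne_empty.2 hF₂)]
    refine sup'_le _ _ fun v hv => ?_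
    obtain ⟨hv, hv₁, hv₂⟩ := mem_compl_insert_union_insert.1 hv
    rw [← ih v hv hv₁ hv₂]
    exact le_sup' (fun w => gameValue s false (insert w L) R) (mem_compl.2 hv)

theorem gameValue_false_eq_insert_insert_of_moves (hne : v₁ ≠ v₂) (h₁ : v₁ ∉ L ∪ R)
    (h₂ : v₂ ∉ L ∪ R)
    (hswap : gameValue s false (insert v₂ L) (insert v₁ R) =
      gameValue s false (insert v₁ L) (insert v₂ R))
    (ih : ∀ v ∉ L ∪ R, v ≠ v₁ → v ≠ v₂ →
      gameValue s true L (insert v R) = gameValue s true (insert v₁ L) (insert v (insert v₂ R))) :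
    gameValue s false L R = gameValue s false (insert v₁ L) (insert v₂ R) := by
  have h₁R : v₁ ∉ L ∪ insert v₂ R := notMem_union_insert h₁ hne
  rw [gameValue_false_eq_inf' s ⟨v₂, mem_compl.2 h₂⟩]
  apply le_antisymm
  · by_cases hF₂ : (insert v₁ L ∪ insert v₂ R)ᶜ = ∅
    · rw [insert_union] at hF₂
      rw [← gameValue_true_eq_of_compl_eq_singleton s
        (compl_eq_singleton_of_compl_insert_eq_empty h₁R hF₂)]
      exact inf'_le (fun w => gameValue s true L (insert w R)) (mem_compl.2 h₂)
    rw [gameValue_false_eq_inf' s (nonempty_iff_ne_empty.2 hF₂)]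
    refine le_inf' _ _ fun v hv => ?_
    obtain ⟨hv, hv₁, hv₂⟩ := mem_compl_insert_union_insert.1 hv
    rw [← ih v hv hv₁ hv₂]
    exact inf'_le (fun w => gameValue s true L (insert w R)) (mem_compl.2 hv)
  · refine le_inf' _ _ fun v hv => ?_
    rw [mem_compl] at hv
    by_cases hv₂ : v = v₂
    · rw [hv₂]
      exact gameValue_false_insert_left_le s h₁R
    by_cases hv₁ : v = v₁
    · rw [hv₁]
      exact hswap.symm.trans_le
        (gameValue_false_insert_left_le s (notMem_union_insert h₂ hne.symm))
    rw [ih v hv hv₁ hv₂]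
    exact gameValue_false_le_insert_right s
      (mem_compl.1 (mem_compl_insert_union_insert.2 ⟨hv, hv₁, hv₂⟩))

theorem gameValue_eq_insert_insert_of_swap (hne : v₁ ≠ v₂) (P : Finset V → Finset V → Prop)
    (hP : ∀ L R v, P L R → v ∉ L ∪ R → v ≠ v₁ → v ≠ v₂ → P (insert v L) R ∧ P L (insert v R))
    (hswap : ∀ t L R, P L R → v₁ ∉ L ∪ R → v₂ ∉ L ∪ R →
      gameValue s t (insert v₂ L) (insert v₁ R) = gameValue s t (insert v₁ L) (insert v₂ R))
    (t : Bool) (hPLR : P L R) (h₁ : v₁ ∉ L ∪ R) (h₂ : v₂ ∉ L ∪ R) :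
    gameValue s t L R = gameValue s t (insert v₁ L) (insert v₂ R) := by
  induction L, R using position_induction generalizing t with
  | step L R ih =>
  cases t with
  | true =>
    refine gameValue_true_eq_insert_insert_of_moves s hne h₁ h₂ (hswap true L R hPLR h₁ h₂)
      fun v hv hv₁ hv₂ => ?_
    rw [insert_comm v]
    exact (ih v hv).1 false (hP L R v hPLR hv hv₁ hv₂).1
      (notMem_insert_union h₁ hv₁.symm) (notMem_insert_union h₂ hv₂.symm)
  | false =>
    refine gameValue_false_eq_insert_insert_of_moves s hne h₁ h₂ (hswap false L R hPLR h₁ h₂)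
      fun v hv hv₁ hv₂ => ?_
    rw [insert_comm v]
    exact (ih v hv).2 true (hP L R v hPLR hv hv₁ hv₂).2
      (notMem_union_insert h₁ hv₁.symm) (notMem_union_insert h₂ hv₂.symm)

end Pairing

section Incidence

variable {V : Type} [Fintype V] [DecidableEq V] (G : SimpleGraph V) [DecidableRel G.Adj]

theorem mbScore_eq_card_filter_sym2 (L R : Finset V) :
    mbScore G L R = #{e ∈ L.sym2 | e ∈ G.edgeSet} := by
  rw [mbScore, ← Set.ncard_coe_finset]
  congr 2
  ext e
  simp only [Set.mem_ofPred_eq, coe_filter, mem_sym2_iff]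
  exact and_comm

theorem mbScore_insert {x : V} {T : Finset V} (hx : x ∉ T) (R : Finset V) :
    mbScore G (insert x T) R = mbScore G T R + #(G.neighborFinset x ∩ T) := by
  rw [mbScore_eq_card_filter_sym2, mbScore_eq_card_filter_sym2, ← cons_eq_insert _ _ hx,
    sym2_cons, filter_disjUnion, card_disjUnion, filter_map, card_map, add_comm]
  congr 3
  ext w
  simp only [mem_filter, mem_cons, Function.comp_apply, Sym2.mkEmbedding_apply,
    SimpleGraph.mem_edgeSet, mem_inter, SimpleGraph.mem_neighborFinset]
  exact ⟨fun ⟨hw, hadj⟩ => ⟨hadj, hw.resolve_left hadj.ne'⟩, fun ⟨hadj, hw⟩ => ⟨.inr hw, hadj⟩⟩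

theorem card_neighborFinset_inter_insert {x v : V} {T : Finset V} (hv : v ∉ T) :
    #(G.neighborFinset x ∩ insert v T) =
      #(G.neighborFinset x ∩ T) + if G.Adj x v then 1 else 0 := by
  by_cases hxv : G.Adj x v
  · rw [inter_insert_of_mem ((G.mem_neighborFinset x v).2 hxv),
      card_insert_of_notMem fun h => hv (mem_inter.1 h).2, if_pos hxv]
  · rw [inter_insert_of_notMem (mt (G.mem_neighborFinset x v).1 hxv), if_neg hxv, add_zero]

-- Counting Maker's neighbours outside `{v₁, v₂}` makes this invariant under every move,
-- including claiming `v₁` or `v₂` themselves.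
def IncidenceTwins (v₁ v₂ : V) (L R : Finset V) : Prop :=
  (∀ w ∉ L ∪ R, w ≠ v₁ → w ≠ v₂ → (G.Adj v₁ w ↔ G.Adj v₂ w)) ∧
    #(G.neighborFinset v₁ ∩ (L \ {v₁, v₂})) = #(G.neighborFinset v₂ ∩ (L \ {v₁, v₂}))

variable {G}

theorem IncidenceTwins.insert_left {v₁ v₂ v : V} {L R : Finset V}
    (h : IncidenceTwins G v₁ v₂ L R) (hv : v ∉ L ∪ R) :
    IncidenceTwins G v₁ v₂ (insert v L) R := by
  refine ⟨fun w hw => h.1 w (by simp_all), ?_⟩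
  by_cases hv₁₂ : v ∈ ({v₁, v₂} : Finset V)
  · rw [insert_sdiff_of_mem _ hv₁₂, h.2]
  · obtain ⟨hv₁, hv₂⟩ : v ≠ v₁ ∧ v ≠ v₂ := by simpa using hv₁₂
    have hvT : v ∉ L \ {v₁, v₂} := fun e => hv (mem_union_left _ (mem_sdiff.1 e).1)
    rw [insert_sdiff_of_notMem _ hv₁₂, card_neighborFinset_inter_insert G hvT,
      card_neighborFinset_inter_insert G hvT, h.2]
    simp only [h.1 v hv hv₁ hv₂]

theorem IncidenceTwins.insert_right {v₁ v₂ v : V} {L R : Finset V}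
    (h : IncidenceTwins G v₁ v₂ L R) : IncidenceTwins G v₁ v₂ L (insert v R) :=
  ⟨fun w hw => h.1 w (by simp_all), h.2⟩

theorem mbScore_insert_swap {v₁ v₂ : V} {T : Finset V} (h₁ : v₁ ∉ T) (h₂ : v₂ ∉ T)
    (hcard : #(G.neighborFinset v₁ ∩ T) = #(G.neighborFinset v₂ ∩ T)) (B B' : Finset V) :
    mbScore G (insert v₂ T) B' = mbScore G (insert v₁ T) B := by
  rw [mbScore_insert G h₂, mbScore_insert G h₁, hcard]
  rfl

theorem gameValue_mbScore_swap {v₁ v₂ : V} {L R : Finset V} (hne : v₁ ≠ v₂)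
    (h : IncidenceTwins G v₁ v₂ L R) (h₁ : v₁ ∉ L ∪ R) (h₂ : v₂ ∉ L ∪ R) (t : Bool) :
    gameValue (mbScore G) t (insert v₂ L) (insert v₁ R) =
      gameValue (mbScore G) t (insert v₁ L) (insert v₂ R) := by
  rw [mem_union, not_or] at h₁ h₂
  have hL : (insert v₁ L).map (Equiv.swap v₁ v₂).toEmbedding = insert v₂ L :=
    map_swap_insert h₁.1 h₂.1
  have hR : (insert v₂ R).map (Equiv.swap v₁ v₂).toEmbedding = insert v₁ R := by
    rw [Equiv.swap_comm]
    exact map_swap_insert h₂.2 h₁.2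
  rw [← hL, ← hR, gameValue_map_equiv]
  refine gameValue_congr_of_invariant _ _
    (fun A B => IncidenceTwins G v₁ v₂ A B ∧ v₁ ∈ A ∧ v₂ ∉ A ∧ v₂ ∈ B) ?_ ?_ t
    ⟨(h.insert_left (by simp [h₁])).insert_right, mem_insert_self _ _,
      by simp [hne.symm, h₂.1], mem_insert_self _ _⟩
  · rintro A B v ⟨hAB, hA₁, hA₂, hB₂⟩ hv
    have hv₂ : v ≠ v₂ := fun e => hv (mem_union_right _ (e ▸ hB₂))
    exact ⟨⟨hAB.insert_left hv, mem_insert_of_mem hA₁, by simp [hA₂, hv₂.symm], hB₂⟩,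
      ⟨hAB.insert_right, hA₁, hA₂, mem_insert_of_mem hB₂⟩⟩
  · rintro A B ⟨hAB, hA₁, hA₂, -⟩ -
    have hT₂ : v₂ ∉ A.erase v₁ := fun h => hA₂ (mem_of_mem_erase h)
    have hT : A \ {v₁, v₂} = A.erase v₁ := by
      ext w
      by_cases hw : w = v₂ <;> simp [hw, hA₂, and_comm]
    rw [← insert_erase hA₁, map_swap_insert (notMem_erase v₁ A) hT₂]
    exact mbScore_insert_swap (notMem_erase v₁ A) hT₂ (hT ▸ hAB.2) _ _

end Incidence

theorem makerBreaker_incidence_equivalent_vertices_general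
    {V : Type} [Fintype V] [DecidableEq V] (G : SimpleGraph V) [DecidableRel G.Adj]
    (VL VR : Finset V) (v1 v2 : V) (hne : v1 ≠ v2)
    (hv1 : v1 ∈ (VL ∪ VR)ᶜ) (hv2 : v2 ∈ (VL ∪ VR)ᶜ)
    (hnbr : (G.neighborFinset v1 ∩ (VL ∪ VR)ᶜ).erase v2 =
        (G.neighborFinset v2 ∩ (VL ∪ VR)ᶜ).erase v1)
    (hcard : (G.neighborFinset v1 ∩ VL).card = (G.neighborFinset v2 ∩ VL).card) :
    gameValue (mbScore G) true VL VR =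
        gameValue (mbScore G) true (insert v1 VL) (insert v2 VR) ∧
      gameValue (mbScore G) false VL VR =
        gameValue (mbScore G) false (insert v1 VL) (insert v2 VR) := by
  rw [mem_compl] at hv1 hv2
  have hadj : ∀ w ∉ VL ∪ VR, w ≠ v1 → w ≠ v2 → (G.Adj v1 w ↔ G.Adj v2 w) := by
    intro w hw hw1 hw2
    rw [mem_union, not_or] at hw
    simpa [hw, hw1, hw2] using congrArg (w ∈ ·) hnbr
  have hVL : VL \ {v1, v2} = VL := sdiff_eq_self_of_disjoint (by simp_all)
  have htwins : IncidenceTwins G v1 v2 VL VR := ⟨hadj, by rwa [hVL]⟩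
  have split := fun t => gameValue_eq_insert_insert_of_swap (mbScore G) hne
    (IncidenceTwins G v1 v2) (fun _ _ _ h hv _ _ => ⟨h.insert_left hv, h.insert_right⟩)
    (fun t _ _ h h₁ h₂ => gameValue_mbScore_swap hne h h₁ h₂ t) t htwins hv1 hv2
  exact ⟨split true, split false⟩

/-- Equivalent free vertices can be split between the two players
without changing the Maker-Breaker Incidence value of the position. -/
theorem makerBreaker_incidence_equivalent_vertices
    {V : Type} [Fintype V] [DecidableEq V] (G : SimpleGraph V) [DecidableRel G.Adj]
    (VL VR : Finset V) (hdisj : Disjoint VL VR) (v1 v2 : V) (hne : v1 ≠ v2)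
    (hv1 : v1 ∈ (VL ∪ VR)ᶜ) (hv2 : v2 ∈ (VL ∪ VR)ᶜ)
    (hnbr : (G.neighborFinset v1 ∩ (VL ∪ VR)ᶜ).erase v2 =
        (G.neighborFinset v2 ∩ (VL ∪ VR)ᶜ).erase v1)
    (hcard : (G.neighborFinset v1 ∩ VL).card = (G.neighborFinset v2 ∩ VL).card) :
    gameValue (mbScore G) true VL VR =
        gameValue (mbScore G) true (insert v1 VL) (insert v2 VR) ∧
      gameValue (mbScore G) false VL VR =
        gameValue (mbScore G) false (insert v1 VL) (insert v2 VR) :=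
  makerBreaker_incidence_equivalent_vertices_general G VL VR v1 v2 hne hv1 hv2 hnbr hcard
end
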